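/- arXiv:1208.4188 — 4 statements merged into one kernel-verified Lean document; each statement's English description precedes it below -/
import Mathlib

section
/- Hayashi–Nagaoka operator inequality: Let S and T be d×d complex matrices with 0 ≤ S ≤ I and T positive semidefinite, and suppose that S + T is positive definite. Let (S+T)^{−1/2} denote the inverse of the unique positive definite square root of S + T. Then I − (S+T)^{−1/2} S (S+T)^{−1/2} ≤ 2(I − S) + 4T. -/
/-!
The inequality holds in any unital C⋆-algebra. Put `P = (S + T)^{1/2}` and `K = P⁻¹`. Using
`T = P² - S`, one checks the identity
`2(1 - S) + 4T - (1 - KSK) = 4(P - S) + 2(1 - K)S(1 - K) + (2 - K)T(2 - K)`.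
The last two terms are conjugates of positive elements by self-adjoint ones, and `P - S ≥ 0`
because `S² ≤ S ≤ S + T = P²` and the square root is operator monotone.
-/

open scoped ComplexOrder

/-- The positive semidefinite square root of a positive semidefinite matrix, as defined in
Mathlib (December 2024), where it has since been removed. -/
noncomputable def Matrix.PosSemidef.sqrt {n 𝕜 : Type*} [Fintype n] [DecidableEq n] [RCLike 𝕜]
    {A : Matrix n n 𝕜} (hA : A.PosSemidef) : Matrix n n 𝕜 :=
  hA.1.eigenvectorUnitary.1 * Matrix.diagonal ((↑) ∘ (√·) ∘ hA.1.eigenvalues) *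
    (star hA.1.eigenvectorUnitary : Matrix n n 𝕜)

lemma hayashi_nagaoka_decomposition {R : Type*} [Ring R] {S T P K : R} (hKP : K * P = 1)
    (hPK : P * K = 1) (hPP : P * P = S + T) :
    2 • (1 - S) + 4 • T - (1 - K * S * K) =
      4 • (P - S) + 2 • ((1 - K) * S * (1 - K)) + (2 - K) * T * (2 - K) := by
  obtain rfl : T = P * P - S := by rw [hPP]; abel
  have hKP_mul (x : R) : K * (P * x) = x := by rw [← mul_assoc, hKP, one_mul]
  noncomm_ring
  simp only [hKP_mul, hKP, hPK, mul_one]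
  abel

namespace CStarAlgebra

variable {A : Type*} [CStarAlgebra A] [PartialOrder A] [StarOrderedRing A]

lemma mul_self_le_self {a : A} (ha₀ : 0 ≤ a) (ha₁ : a ≤ 1) : a * a ≤ a := by
  set c := CFC.sqrt a
  have hcc : c * c = a := CFC.sqrt_mul_sqrt_self a ha₀
  calc a * a = c * a * c := by rw [← hcc]; noncomm_ring
    _ ≤ c * 1 * c := conjugate_le_conjugate_of_nonneg ha₁ (CFC.sqrt_nonneg a)
    _ = a := by rw [mul_one, hcc]

lemma le_of_mul_self_le_mul_self {a b : A} (ha : 0 ≤ a) (hb : 0 ≤ b) (h : a * a ≤ b * b) :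
    a ≤ b := by
  rw [← CFC.sqrt_mul_self a ha, ← CFC.sqrt_mul_self b hb]
  exact CFC.sqrt_le_sqrt _ _ h

theorem hayashi_nagaoka {S T P K : A} (hS₀ : 0 ≤ S) (hS₁ : S ≤ 1) (hT : 0 ≤ T)
    (hP : 0 ≤ P) (hPP : P * P = S + T) (hKP : K * P = 1) (hPK : P * K = 1) :
    1 - K * S * K ≤ 2 • (1 - S) + 4 • T := by
  have hK : IsSelfAdjoint K := by
    have hKP' : star K * P = 1 := by
      rw [← hP.isSelfAdjoint.star_eq, ← star_mul, hPK, star_one]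
    exact left_inv_eq_right_inv hKP' hPK
  have hSP : S ≤ P := by
    refine le_of_mul_self_le_mul_self hS₀ hP ?_
    rw [hPP]
    exact (mul_self_le_self hS₀ hS₁).trans (le_add_of_nonneg_right hT)
  have hS_conj : 0 ≤ (1 - K) * S * (1 - K) :=
    ((IsSelfAdjoint.one A).sub hK).conjugate_nonneg hS₀
  have hT_conj : 0 ≤ (2 - K) * T * (2 - K) :=
    ((IsSelfAdjoint.ofNat 2).sub hK).conjugate_nonneg hT
  rw [← sub_nonneg, hayashi_nagaoka_decomposition hKP hPK hPP]
  exact add_nonneg (add_nonneg (nsmul_nonneg (sub_nonneg.2 hSP) 4) (nsmul_nonneg hS_conj 2)) hT_conj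

end CStarAlgebra

open scoped MatrixOrder in
lemma Matrix.PosSemidef.sqrt_eq_cfcSqrt {n 𝕜 : Type*} [Fintype n] [DecidableEq n] [RCLike 𝕜]
    {A : Matrix n n 𝕜} (hA : A.PosSemidef) : hA.sqrt = CFC.sqrt A := by
  rw [CFC.sqrt_eq_cfc, cfc_nnreal_eq_real _ A, hA.1.cfc_eq]
  simp only [IsHermitian.cfc, Unitary.conjStarAlgAut_apply, Matrix.PosSemidef.sqrt]
  congr 3
  ext i
  simp [hA.eigenvalues_nonneg i]

/-- Hayashi–Nagaoka operator inequality: for `0 ≤ S ≤ I`, `T ≥ 0` with `S + T` positive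
definite, `I − (S+T)^{−1/2} S (S+T)^{−1/2} ≤ 2(I − S) + 4T`, where `(S+T)^{−1/2}` is the
inverse of the (unique) positive definite square root of `S + T`. -/
theorem hayashi_nagaoka {d : ℕ} (S T : Matrix (Fin d) (Fin d) ℂ)
    (hS0 : S.PosSemidef) (hS1 : ((1 : Matrix (Fin d) (Fin d) ℂ) - S).PosSemidef)
    (hT : T.PosSemidef) (hST : (S + T).PosDef) :
    ((2 : ℂ) • ((1 : Matrix (Fin d) (Fin d) ℂ) - S) + (4 : ℂ) • T -
        ((1 : Matrix (Fin d) (Fin d) ℂ) -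
          (hST.posSemidef.sqrt)⁻¹ * S * (hST.posSemidef.sqrt)⁻¹)).PosSemidef := by
  open scoped MatrixOrder Matrix.Norms.L2Operator in
  rw [hST.posSemidef.sqrt_eq_cfcSqrt, ofNat_smul_eq_nsmul ℂ 2, ofNat_smul_eq_nsmul ℂ 4]
  set P := CFC.sqrt (S + T)
  have hdet : IsUnit P.det :=
    (Matrix.isUnit_iff_isUnit_det P).1 (Matrix.isStrictlyPositive_iff_posDef.2 hST).isUnit_cfcSqrt
  exact Matrix.le_iff.1 <| CStarAlgebra.hayashi_nagaoka hS0.nonneg (sub_nonneg.1 hS1.nonneg)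
    hT.nonneg (CFC.sqrt_nonneg _) (CFC.sqrt_mul_sqrt_self _ hST.posSemidef.nonneg)
    (Matrix.nonsing_inv_mul P hdet) (Matrix.mul_nonsing_inv P hdet)
end

section
/- Probability that independent sequences are jointly typical: Let 𝒳, 𝒴 be finite sets and p a joint probability distribution on 𝒳×𝒴 with marginals p_X and p_Y. Fix n ∈ ℕ and δ > 0, and define the jointly typical set J^n_δ as the set of pairs (xⁿ, yⁿ) ∈ 𝒳ⁿ×𝒴ⁿ such that xⁿ ∈ T^n_δ(p_X), yⁿ ∈ T^n_δ(p_Y), and the paired sequence ((x₁,y₁),…,(xₙ,yₙ)) ∈ T^n_δ(p). Then ∑_{(xⁿ,yⁿ)∈J^n_δ} (∏ᵢ p_X(xᵢ)) (∏ᵢ p_Y(yᵢ)) ≤ 2^{−n(I(X;Y) − 3δ)}, where I(X;Y) := H(p_X) + H(p_Y) − H(p). -/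
open scoped BigOperators

/-- Shannon entropy (base 2) of a probability vector. -/
noncomputable def shannonH {α : Type*} [Fintype α] (p : α → ℝ) : ℝ :=
  ∑ a, -(p a * Real.logb 2 (p a))

/-- The entropy-typical set `T^n_δ(p)`. -/
def Typical {α : Type*} [Fintype α] (p : α → ℝ) (n : ℕ) (δ : ℝ) (x : Fin n → α) : Prop :=
  0 < ∏ i, p (x i) ∧
    |(-(1 / (n : ℝ)) * Real.logb 2 (∏ i, p (x i))) - shannonH p| ≤ δ

/-
Typicality pins each product probability to within a factor `2^{±nδ}` of `2^{-nH}`. On the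
jointly typical set this bounds `p_X(xⁿ) p_Y(yⁿ)` by `2^{-n(I(X;Y) - 3δ)} p(xⁿ, yⁿ)`, and the
products `p(xⁿ, yⁿ)` sum to `(∑ p)ⁿ = 1` over all pairs of sequences.
-/

namespace Typical

variable {α : Type*} [Fintype α] {p : α → ℝ} {n : ℕ} {δ : ℝ} {x : Fin n → α}

theorem logb_prod_mem_Icc (h : Typical p n δ x) :
    Real.logb 2 (∏ i, p (x i)) ∈ Set.Icc (-(n : ℝ) * (shannonH p + δ)) (-(n : ℝ) * (shannonH p - δ)) := by
  obtain ⟨-, habs⟩ := h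
  rcases Nat.eq_zero_or_pos n with rfl | hn
  · simp
  have hn' : (0 : ℝ) < n := by exact_mod_cast hn
  have hmul : -(1 / (n : ℝ)) * Real.logb 2 (∏ i, p (x i)) * n = -Real.logb 2 (∏ i, p (x i)) := by
    field_simp
  obtain ⟨hlo, hhi⟩ := abs_le.mp habs
  have hlo' := mul_le_mul_of_nonneg_right hlo hn'.le
  have hhi' := mul_le_mul_of_nonneg_right hhi hn'.le
  rw [sub_mul, hmul] at hlo' hhi'
  constructor <;> linarith

theorem two_rpow_le_prod (h : Typical p n δ x) :
    (2 : ℝ) ^ (-(n : ℝ) * (shannonH p + δ)) ≤ ∏ i, p (x i) := by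
  rw [← Real.rpow_logb two_pos (by norm_num : (2 : ℝ) ≠ 1) h.1]
  exact Real.rpow_le_rpow_of_exponent_le one_le_two h.logb_prod_mem_Icc.1

theorem prod_le_two_rpow (h : Typical p n δ x) :
    ∏ i, p (x i) ≤ (2 : ℝ) ^ (-(n : ℝ) * (shannonH p - δ)) := by
  rw [← Real.rpow_logb two_pos (by norm_num : (2 : ℝ) ≠ 1) h.1]
  exact Real.rpow_le_rpow_of_exponent_le one_le_two h.logb_prod_mem_Icc.2

end Typical

theorem prod_mul_prod_le_of_typical {X Y : Type*} [Fintype X] [Fintype Y]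
    {pX : X → ℝ} {pY : Y → ℝ} {p : X × Y → ℝ} {n : ℕ} {δ : ℝ} {x : Fin n → X} {y : Fin n → Y}
    (hx : Typical pX n δ x) (hy : Typical pY n δ y) (hxy : Typical p n δ (fun i => (x i, y i))) :
    (∏ i, pX (x i)) * (∏ i, pY (y i)) ≤
      (2 : ℝ) ^ (-(n : ℝ) * ((shannonH pX + shannonH pY - shannonH p) - 3 * δ)) *
        ∏ i, p (x i, y i) := by
  calc (∏ i, pX (x i)) * (∏ i, pY (y i))
      ≤ (2 : ℝ) ^ (-(n : ℝ) * (shannonH pX - δ)) * (2 : ℝ) ^ (-(n : ℝ) * (shannonH pY - δ)) :=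
        mul_le_mul hx.prod_le_two_rpow hy.prod_le_two_rpow hy.1.le (by positivity)
    _ = (2 : ℝ) ^ (-(n : ℝ) * ((shannonH pX + shannonH pY - shannonH p) - 3 * δ)) *
          (2 : ℝ) ^ (-(n : ℝ) * (shannonH p + δ)) := by
        rw [← Real.rpow_add two_pos, ← Real.rpow_add two_pos]
        ring_nf
    _ ≤ _ := mul_le_mul_of_nonneg_left hxy.two_rpow_le_prod (by positivity)

theorem sum_sum_prod_pair_eq_pow {R X Y : Type*} [CommSemiring R] [Fintype X] [Fintype Y]
    (p : X × Y → R) (n : ℕ) :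
    ∑ x : Fin n → X, ∑ y : Fin n → Y, ∏ i, p (x i, y i) = (∑ z, p z) ^ n := by
  rw [← Fintype.sum_prod_type', ← Fin.prod_const, Finset.prod_univ_sum]
  exact Fintype.sum_equiv (Equiv.arrowProdEquivProdArrow _ _ _).symm _ _ fun _ => rfl

open scoped Classical in
theorem jointly_typical_probability_general {X Y : Type*} [Fintype X] [Fintype Y]
    (p : X × Y → ℝ) (hp : ∀ z, 0 ≤ p z) (hpsum : ∑ z, p z = 1)
    (n : ℕ) (δ : ℝ) :
    ∑ x : Fin n → X, ∑ y : Fin n → Y,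
      (if Typical (fun a => ∑ b, p (a, b)) n δ x ∧
          Typical (fun b => ∑ a, p (a, b)) n δ y ∧
          Typical p n δ (fun i => (x i, y i)) then
        (∏ i, ∑ b, p (x i, b)) * (∏ i, ∑ a, p (a, y i))
      else 0) ≤
      (2 : ℝ) ^ (-(n : ℝ) *
        ((shannonH (fun a => ∑ b, p (a, b)) + shannonH (fun b => ∑ a, p (a, b)) -
            shannonH p) - 3 * δ)) := by
  set R := (2 : ℝ) ^ (-(n : ℝ) *
    ((shannonH (fun a => ∑ b, p (a, b)) + shannonH (fun b => ∑ a, p (a, b)) - shannonH p) - 3 * δ))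
  calc _ ≤ ∑ x : Fin n → X, ∑ y : Fin n → Y, R * ∏ i, p (x i, y i) := by
        refine Finset.sum_le_sum fun x _ => Finset.sum_le_sum fun y _ => ?_
        split_ifs with h
        · exact (prod_mul_prod_le_of_typical h.1 h.2.1 h.2.2 :)
        · exact mul_nonneg (by positivity) (Finset.prod_nonneg fun i _ => hp _)
    _ = R := by
        simp_rw [← Finset.mul_sum]
        rw [sum_sum_prod_pair_eq_pow, hpsum, one_pow, mul_one]

open scoped Classical in
/-- The probability that two independent sequences (drawn from the marginals) are jointly
typical is at most `2^{−n(I(X;Y) − 3δ)}`. -/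
theorem jointly_typical_probability {X Y : Type*} [Fintype X] [Fintype Y]
    (p : X × Y → ℝ) (hp : ∀ z, 0 ≤ p z) (hpsum : ∑ z, p z = 1)
    (n : ℕ) (δ : ℝ) (hδ : 0 < δ) :
    ∑ x : Fin n → X, ∑ y : Fin n → Y,
      (if Typical (fun a => ∑ b, p (a, b)) n δ x ∧
          Typical (fun b => ∑ a, p (a, b)) n δ y ∧
          Typical p n δ (fun i => (x i, y i)) then
        (∏ i, ∑ b, p (x i, b)) * (∏ i, ∑ a, p (a, y i))
      else 0) ≤
      (2 : ℝ) ^ (-(n : ℝ) *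
        ((shannonH (fun a => ∑ b, p (a, b)) + shannonH (fun b => ∑ a, p (a, b)) -
            shannonH p) - 3 * δ)) :=
  jointly_typical_probability_general p hp hpsum n δ
end

section
/- Classical conditional packing lemma (core expectation bound): Let 𝒰, 𝒳, 𝒴 be finite sets, p_U a probability distribution on 𝒰, p_{X|U} a conditional distribution, and w(y|x,u) a channel (a conditional distribution on 𝒴 for each (x,u)). Define w̄(y|u) := ∑_x p_{X|U}(x|u) w(y|x,u), the conditional entropies H(Y|X,U) := ∑_{u,x} p_U(u)p_{X|U}(x|u) H(w(·|x,u)) and H(Y|U) := ∑_u p_U(u) H(w̄(·|u)), and I(X;Y|U) := H(Y|U) − H(Y|X,U). Then for every n ∈ ℕ and δ > 0, ∑_{uⁿ∈𝒰ⁿ} ∑_{xⁿ∈𝒳ⁿ} ∑_{x̃ⁿ∈𝒳ⁿ} ∑_{ỹⁿ∈𝒴ⁿ} (∏ᵢ p_U(uᵢ)) (∏ᵢ p_{X|U}(xᵢ|uᵢ)) (∏ᵢ p_{X|U}(x̃ᵢ|uᵢ)) (∏ᵢ w(ỹᵢ|x̃ᵢ,uᵢ)) · 1[ỹⁿ ∈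 T^n_δ(Y|xⁿ,uⁿ)] · 1[ỹⁿ ∈ T^n_δ(Y|uⁿ)] ≤ 2^{−n(I(X;Y|U) − 2δ)}. -/
open scoped BigOperators

section
variable {U X Y : Type*} [Fintype U] [Fintype X] [Fintype Y]

/-- The averaged channel `w̄(y|u) = ∑ₓ p_{X|U}(x|u) w(y|x,u)`. -/
noncomputable def wbar (pXU : U → X → ℝ) (w : X → U → Y → ℝ) : U → Y → ℝ :=
  fun u y => ∑ x, pXU u x * w x u y

/-- The conditional entropy `H(Y|X,U)`. -/
noncomputable def HYXU (pU : U → ℝ) (pXU : U → X → ℝ) (w : X → U → Y → ℝ) : ℝ :=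
  ∑ u, ∑ x, pU u * pXU u x * shannonH (w x u)

/-- The conditional entropy `H(Y|U)` of the averaged channel. -/
noncomputable def HYU (pU : U → ℝ) (pXU : U → X → ℝ) (w : X → U → Y → ℝ) : ℝ :=
  ∑ u, pU u * shannonH (wbar pXU w u)

/-- `yₙ ∈ T^n_δ(Y|xₙ,uₙ)`, the conditionally typical set for the channel `w`. -/
def CondTypicalXU (pU : U → ℝ) (pXU : U → X → ℝ) (w : X → U → Y → ℝ) (n : ℕ) (δ : ℝ)
    (xₙ : Fin n → X) (uₙ : Fin n → U) (yₙ : Fin n → Y) : Prop :=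
  0 < ∏ i, w (xₙ i) (uₙ i) (yₙ i) ∧
    |(-(1 / (n : ℝ)) * Real.logb 2 (∏ i, w (xₙ i) (uₙ i) (yₙ i))) - HYXU pU pXU w| ≤ δ

/-- `yₙ ∈ T^n_δ(Y|uₙ)`, the conditionally typical set for the averaged channel `w̄`. -/
def CondTypicalU (pU : U → ℝ) (pXU : U → X → ℝ) (w : X → U → Y → ℝ) (n : ℕ) (δ : ℝ)
    (uₙ : Fin n → U) (yₙ : Fin n → Y) : Prop :=
  0 < ∏ i, wbar pXU w (uₙ i) (yₙ i) ∧
    |(-(1 / (n : ℝ)) * Real.logb 2 (∏ i, wbar pXU w (uₙ i) (yₙ i))) - HYU pU pXU w| ≤ δ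

/-!
Averaging the decoy input `x̃ⁿ` out of the sum leaves the averaged channel `w̄ⁿ(ỹⁿ|uⁿ)`, which is
at most `2^{-n(H(Y|U)-δ)}` on `T^n_δ(Y|uⁿ)`. On `T^n_δ(Y|xⁿ,uⁿ)` the indicator is at most
`wⁿ(ỹⁿ|xⁿ,uⁿ) 2^{n(H(Y|X,U)+δ)}`, and the remaining sum of `p(uⁿ) p(xⁿ|uⁿ) wⁿ(ỹⁿ|xⁿ,uⁿ)` is `1`.
-/

open Finset

section Packing

variable {α β γ : Type*} [Fintype β] [Fintype γ]
  {P : α → ℝ} {Q : α → β → ℝ} {V : β → α → γ → ℝ}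
  {S : β → α → γ → Prop} {T : α → γ → Prop} [∀ x u y, Decidable (S x u y)]
  [∀ u y, Decidable (T u y)] {a b : ℝ}

lemma sum_sum_mul_ite_mul_ite_le (hV : ∀ x u y, 0 ≤ V x u y)
    (hVsum : ∀ x u, ∑ y, V x u y = 1) (ha : 0 ≤ a) (hb : 0 ≤ b)
    (hS : ∀ x u y, S x u y → 1 ≤ V x u y * a) (hT : ∀ u y, T u y → wbar Q V u y ≤ b)
    (u : α) (x : β) :
    ∑ x', ∑ y, Q u x' * V x' u y * (if S x u y then 1 else 0) * (if T u y then 1 else 0) ≤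
      a * b := by
  have hTb : ∀ y, wbar Q V u y * (if T u y then 1 else 0) ≤ b := fun y => by
    split_ifs with h
    · simpa using hT u y h
    · simpa using hb
  have hSa : ∀ y, (if S x u y then 1 else 0 : ℝ) ≤ V x u y * a := fun y => by
    split_ifs with h
    · exact hS x u y h
    · exact mul_nonneg (hV x u y) ha
  calc ∑ x', ∑ y, Q u x' * V x' u y * (if S x u y then 1 else 0) * (if T u y then 1 else 0)
      = ∑ y, wbar Q V u y * (if T u y then 1 else 0) * (if S x u y then 1 else 0) := by
        rw [sum_comm]
        simp only [wbar, sum_mul]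
        exact sum_congr rfl fun y _ => sum_congr rfl fun x' _ => by ring
    _ ≤ ∑ y, b * (V x u y * a) :=
        sum_le_sum fun y _ => mul_le_mul (hTb y) (hSa y) (by split_ifs <;> norm_num) hb
    _ = a * b := by rw [← mul_sum, ← sum_mul, hVsum, one_mul, mul_comm]

theorem packing_sum_le [Fintype α] (hP : ∀ u, 0 ≤ P u) (hPsum : ∑ u, P u = 1)
    (hQ : ∀ u x, 0 ≤ Q u x) (hQsum : ∀ u, ∑ x, Q u x = 1) (hV : ∀ x u y, 0 ≤ V x u y)
    (hVsum : ∀ x u, ∑ y, V x u y = 1) (ha : 0 ≤ a) (hb : 0 ≤ b)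
    (hS : ∀ x u y, S x u y → 1 ≤ V x u y * a) (hT : ∀ u y, T u y → wbar Q V u y ≤ b) :
    ∑ u, ∑ x, ∑ x', ∑ y, P u * Q u x * Q u x' * V x' u y *
      (if S x u y then 1 else 0) * (if T u y then 1 else 0) ≤ a * b :=
  calc _ = ∑ u, P u * ∑ x, Q u x * ∑ x', ∑ y, Q u x' * V x' u y *
          (if S x u y then 1 else 0) * (if T u y then 1 else 0) := by
        simp only [mul_sum, mul_assoc]
    _ ≤ ∑ u, P u * ∑ x, Q u x * (a * b) := by
        gcongr with u _ x _
        · exact hP u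
        · exact hQ u x
        · exact sum_sum_mul_ite_mul_ite_le hV hVsum ha hb hS hT u x
    _ = a * b := by simp only [← sum_mul, hQsum, hPsum, one_mul]

end Packing

section Memoryless

variable {ι α β γ : Type*} [Fintype ι] [DecidableEq ι]

lemma sum_pi_prod_eq_one [Fintype α] {g : ι → α → ℝ} (h : ∀ i, ∑ a, g i a = 1) :
    ∑ f : ι → α, ∏ i, g i (f i) = 1 := by
  rw [← Fintype.prod_sum]
  simp [h]

lemma wbar_pi [Fintype β] (Q : α → β → ℝ) (V : β → α → γ → ℝ) (u : ι → α) (y : ι → γ) :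
    wbar (fun (uₙ : ι → α) (xₙ : ι → β) => ∏ i, Q (uₙ i) (xₙ i))
      (fun (xₙ : ι → β) (uₙ : ι → α) (yₙ : ι → γ) => ∏ i, V (xₙ i) (uₙ i) (yₙ i)) u y =
      ∏ i, wbar Q V (u i) (y i) := by
  simp only [wbar, ← prod_mul_distrib]
  exact (Fintype.prod_sum fun i x => Q (u i) x * V x (u i) (y i)).symm

end Memoryless

section Typical

variable {n : ℕ} {f : Fin n → ℝ} {H δ : ℝ}

lemma neg_logb_prod_mem_Icc (h : |-(1 / (n : ℝ)) * Real.logb 2 (∏ i, f i) - H| ≤ δ) :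
    -Real.logb 2 (∏ i, f i) ∈ Set.Icc (n * (H - δ)) (n * (H + δ)) := by
  rcases eq_or_ne n 0 with rfl | hn
  -- `1 / 0 = 0`, so this case holds only because the product is empty
  · simp
  have hscale : -Real.logb 2 (∏ i, f i) = n * (-(1 / (n : ℝ)) * Real.logb 2 (∏ i, f i)) := by
    field_simp
  obtain ⟨hlo, hhi⟩ := abs_le.mp h
  rw [hscale]
  exact ⟨by gcongr; linarith, by gcongr; linarith⟩

lemma prod_le_rpow_of_typical (hpos : 0 < ∏ i, f i)
    (h : |-(1 / (n : ℝ)) * Real.logb 2 (∏ i, f i) - H| ≤ δ) :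
    ∏ i, f i ≤ (2 : ℝ) ^ (-(n : ℝ) * (H - δ)) := by
  rw [← Real.rpow_logb two_pos (by norm_num) hpos]
  gcongr
  · norm_num
  · linarith [(neg_logb_prod_mem_Icc h).1]

lemma one_le_prod_mul_rpow_of_typical (hpos : 0 < ∏ i, f i)
    (h : |-(1 / (n : ℝ)) * Real.logb 2 (∏ i, f i) - H| ≤ δ) :
    1 ≤ (∏ i, f i) * (2 : ℝ) ^ ((n : ℝ) * (H + δ)) := by
  rw [← Real.rpow_logb two_pos (by norm_num) hpos, ← Real.rpow_add two_pos]
  exact Real.one_le_rpow (by norm_num) (by linarith [(neg_logb_prod_mem_Icc h).2])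

end Typical

open scoped Classical in
theorem classical_conditional_packing_general
    (pU : U → ℝ) (hpU : ∀ u, 0 ≤ pU u) (hpUsum : ∑ u, pU u = 1)
    (pXU : U → X → ℝ) (hpXU : ∀ u x, 0 ≤ pXU u x) (hpXUsum : ∀ u, ∑ x, pXU u x = 1)
    (w : X → U → Y → ℝ) (hw : ∀ x u y, 0 ≤ w x u y) (hwsum : ∀ x u, ∑ y, w x u y = 1)
    (n : ℕ) (δ : ℝ) :
    ∑ uₙ : Fin n → U, ∑ xₙ : Fin n → X, ∑ xₙ' : Fin n → X, ∑ yₙ : Fin n → Y,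
      (∏ i, pU (uₙ i)) * (∏ i, pXU (uₙ i) (xₙ i)) * (∏ i, pXU (uₙ i) (xₙ' i)) *
        (∏ i, w (xₙ' i) (uₙ i) (yₙ i)) *
        (if CondTypicalXU pU pXU w n δ xₙ uₙ yₙ then 1 else 0) *
        (if CondTypicalU pU pXU w n δ uₙ yₙ then 1 else 0) ≤
      (2 : ℝ) ^ (-(n : ℝ) * ((HYU pU pXU w - HYXU pU pXU w) - 2 * δ)) :=
  by
  have hS (xₙ : Fin n → X) (uₙ : Fin n → U) (yₙ : Fin n → Y)
      (h : CondTypicalXU pU pXU w n δ xₙ uₙ yₙ) :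
      1 ≤ (∏ i, w (xₙ i) (uₙ i) (yₙ i)) * (2 : ℝ) ^ ((n : ℝ) * (HYXU pU pXU w + δ)) :=
    one_le_prod_mul_rpow_of_typical h.1 h.2
  have hT (uₙ : Fin n → U) (yₙ : Fin n → Y) (h : CondTypicalU pU pXU w n δ uₙ yₙ) :
      wbar (fun (uₙ : Fin n → U) (xₙ : Fin n → X) => ∏ i, pXU (uₙ i) (xₙ i))
        (fun xₙ uₙ yₙ => ∏ i, w (xₙ i) (uₙ i) (yₙ i)) uₙ yₙ ≤
        (2 : ℝ) ^ (-(n : ℝ) * (HYU pU pXU w - δ)) := by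
    rw [wbar_pi]
    exact prod_le_rpow_of_typical h.1 h.2
  calc _ ≤ (2 : ℝ) ^ ((n : ℝ) * (HYXU pU pXU w + δ)) *
        (2 : ℝ) ^ (-(n : ℝ) * (HYU pU pXU w - δ)) :=
      packing_sum_le (P := fun uₙ : Fin n → U => ∏ i, pU (uₙ i))
        (Q := fun (uₙ : Fin n → U) (xₙ : Fin n → X) => ∏ i, pXU (uₙ i) (xₙ i))
        (V := fun (xₙ : Fin n → X) (uₙ : Fin n → U) (yₙ : Fin n → Y) =>
          ∏ i, w (xₙ i) (uₙ i) (yₙ i))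
        (fun _ => prod_nonneg fun i _ => hpU _) (sum_pi_prod_eq_one fun _ => hpUsum)
        (fun _ _ => prod_nonneg fun i _ => hpXU _ _)
        (fun _ => sum_pi_prod_eq_one fun _ => hpXUsum _)
        (fun _ _ _ => prod_nonneg fun i _ => hw _ _ _)
        (fun _ _ => sum_pi_prod_eq_one fun _ => hwsum _ _)
        (Real.rpow_nonneg zero_le_two _) (Real.rpow_nonneg zero_le_two _) hS hT
    _ = _ := by rw [← Real.rpow_add two_pos]; ring_nf

open scoped Classical in
/-- Classical conditional packing lemma (core expectation bound). -/
theorem classical_conditional_packing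
    (pU : U → ℝ) (hpU : ∀ u, 0 ≤ pU u) (hpUsum : ∑ u, pU u = 1)
    (pXU : U → X → ℝ) (hpXU : ∀ u x, 0 ≤ pXU u x) (hpXUsum : ∀ u, ∑ x, pXU u x = 1)
    (w : X → U → Y → ℝ) (hw : ∀ x u y, 0 ≤ w x u y) (hwsum : ∀ x u, ∑ y, w x u y = 1)
    (n : ℕ) (δ : ℝ) (hδ : 0 < δ) :
    ∑ uₙ : Fin n → U, ∑ xₙ : Fin n → X, ∑ xₙ' : Fin n → X, ∑ yₙ : Fin n → Y,
      (∏ i, pU (uₙ i)) * (∏ i, pXU (uₙ i) (xₙ i)) * (∏ i, pXU (uₙ i) (xₙ' i)) *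
        (∏ i, w (xₙ' i) (uₙ i) (yₙ i)) *
        (if CondTypicalXU pU pXU w n δ xₙ uₙ yₙ then 1 else 0) *
        (if CondTypicalU pU pXU w n δ uₙ yₙ then 1 else 0) ≤
      (2 : ℝ) ^ (-(n : ℝ) * ((HYU pU pXU w - HYXU pU pXU w) - 2 * δ)) :=
  classical_conditional_packing_general pU hpU hpUsum pXU hpXU hpXUsum w hw hwsum n δ

end
end

section
/- Core estimate of the quantum packing lemma: Let 𝒰 and 𝒳 be finite sets, p a probability distribution on 𝒰, q(·|u) a conditional probability distribution on 𝒳 for each u ∈ 𝒰, and (ρ_{u,x}) density matrices on ℂ^D, with averages ρ̄_u := ∑_x q(x|u) ρ_{u,x}. Let (Π̄_u)_{u∈𝒰} and (Π_{u,x})_{u∈𝒰,x∈𝒳} be orthogonal projections on ℂ^D, and let c ≥ 0 and C ≥ 0 be real numbers such that Π̄_u ρ̄_u Π̄_u ≤ c·Π̄_u for every u, and ∑_{u,x} p(u) q(x|u) Tr[Π_{u,x}] ≤ C. Then ∑_{u,x,x̃} p(u) q(x|u) q(x̃|u) Tr[ Π̄_u Π_{u,x} Π̄_u ρ_{u,x̃}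 ] ≤ c·C. (In the quantum packing lemma this is applied with ρ_{u,x} the n-fold tensor-power channel outputs, Π̄_u and Π_{u,x} the averaged and conditionally typical projectors, c = 2^{−n(H(B|U)−δ)} and C = 2^{n(H(B|U,X)+δ)}, yielding the bound 2^{−n(I(X;B|U)−2δ)}.) -/
open scoped BigOperators ComplexOrder

/-!
For fixed `u` and `x`, the weighted sum over `x̃` is `Tr[Π̄ Π Π̄ ρ̄] = Tr[Π (Π̄ ρ̄ Π̄)]`.
Since `Y ↦ Tr[P Y]` is monotone for `P ≥ 0`, the hypothesis `Π̄ ρ̄ Π̄ ≤ c Π̄` and `Π̄ ≤ 1` bound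
this by `c Tr[Π Π̄] ≤ c Tr[Π]`; averaging over `u` and `x` gives `c C`.
-/

namespace Matrix

open scoped MatrixOrder
open RCLike

variable {n 𝕜 : Type*} [Fintype n] [RCLike 𝕜]

theorem trace_mul_nonneg {A B : Matrix n n 𝕜} (hA : 0 ≤ A) (hB : 0 ≤ B) :
    0 ≤ (A * B).trace := by
  classical
  obtain ⟨M, rfl⟩ := CStarAlgebra.nonneg_iff_eq_star_mul_self.mp hA
  rw [star_eq_conjTranspose, Matrix.mul_assoc, trace_mul_comm]
  exact ((nonneg_iff_posSemidef.mp hB).mul_mul_conjTranspose_same M).trace_nonneg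

theorem re_trace_mul_le_of_le {P A B : Matrix n n 𝕜} (hP : 0 ≤ P) (hAB : A ≤ B) :
    re (P * A).trace ≤ re (P * B).trace := by
  have := (le_iff_re_im.mp (trace_mul_nonneg hP (sub_nonneg.mpr hAB))).1
  rwa [Matrix.mul_sub, trace_sub, map_sub, map_zero, sub_nonneg] at this

theorem re_trace_mul_mul_mul_le_of_isStarProjection {P Q σ : Matrix n n 𝕜} {c : ℝ}
    (hP : IsStarProjection P) (hQ : IsStarProjection Q) (hc : 0 ≤ c)
    (hσ : P * σ * P ≤ c • P) :
    re (P * Q * P * σ).trace ≤ c * re Q.trace := by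
  classical
  calc re (P * Q * P * σ).trace = re (Q * (P * σ * P)).trace := by
        rw [Matrix.mul_assoc, Matrix.mul_assoc, trace_mul_comm]; simp only [Matrix.mul_assoc]
    _ ≤ re (Q * (c • P)).trace := re_trace_mul_le_of_le hQ.nonneg hσ
    _ = c * re (Q * P).trace := by rw [mul_smul_comm, trace_smul, smul_re]
    _ ≤ c * re (Q * 1).trace :=
        mul_le_mul_of_nonneg_left (re_trace_mul_le_of_le hQ.nonneg hP.le_one) hc
    _ = c * re Q.trace := by rw [Matrix.mul_one]

theorem re_trace_mul_sum_smul {ι : Type*} [Fintype ι] (A : Matrix n n 𝕜) (w : ι → ℝ)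
    (B : ι → Matrix n n 𝕜) :
    re (A * ∑ i, (w i : 𝕜) • B i).trace = ∑ i, w i * re (A * B i).trace := by
  simp only [algebraMap_smul, Matrix.mul_sum, Matrix.mul_smul, trace_sum, trace_smul, map_sum,
    smul_re]

end Matrix

theorem quantum_packing_core_general {U X : Type*} [Fintype U] [Fintype X] {D : ℕ}
    (p : U → ℝ) (hp : ∀ u, 0 ≤ p u)
    (q : U → X → ℝ) (hq : ∀ u x, 0 ≤ q u x)
    (ρ : U → X → Matrix (Fin D) (Fin D) ℂ)
    (Pb : U → Matrix (Fin D) (Fin D) ℂ)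
    (hPb : ∀ u, (Pb u).IsHermitian ∧ Pb u * Pb u = Pb u)
    (Pux : U → X → Matrix (Fin D) (Fin D) ℂ)
    (hPux : ∀ u x, (Pux u x).IsHermitian ∧ Pux u x * Pux u x = Pux u x)
    (c C : ℝ) (hc : 0 ≤ c)
    (h1 : ∀ u, (c • Pb u - Pb u * (∑ x, (q u x : ℂ) • ρ u x) * Pb u).PosSemidef)
    (h2 : ∑ u, ∑ x, p u * q u x * (Pux u x).trace.re ≤ C) :
    ∑ u, ∑ x, ∑ x', p u * q u x * q u x' *
        (Pb u * Pux u x * Pb u * ρ u x').trace.re ≤ c * C := by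
  have key u x : ∑ x', q u x' * (Pb u * Pux u x * Pb u * ρ u x').trace.re ≤
      c * (Pux u x).trace.re :=
    Matrix.re_trace_mul_sum_smul (Pb u * Pux u x * Pb u) (q u) (ρ u) ▸
      Matrix.re_trace_mul_mul_mul_le_of_isStarProjection ⟨(hPb u).2, (hPb u).1⟩
        ⟨(hPux u x).2, (hPux u x).1⟩ hc (h1 u)
  calc ∑ u, ∑ x, ∑ x', p u * q u x * q u x' * (Pb u * Pux u x * Pb u * ρ u x').trace.re
      = ∑ u, ∑ x, p u * q u x *
          ∑ x', q u x' * (Pb u * Pux u x * Pb u * ρ u x').trace.re := by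
        simp only [Finset.mul_sum, mul_assoc]
    _ ≤ ∑ u, ∑ x, p u * q u x * (c * (Pux u x).trace.re) := by
        gcongr with u _ x _
        · exact mul_nonneg (hp u) (hq u x)
        · exact key u x
    _ = c * ∑ u, ∑ x, p u * q u x * (Pux u x).trace.re := by
        simp only [Finset.mul_sum, mul_left_comm c]
    _ ≤ c * C := by gcongr

/-- Core estimate of the quantum packing lemma: if `Π̄ᵤ ρ̄ᵤ Π̄ᵤ ≤ c·Π̄ᵤ` for every `u` and the
expected rank `∑ p(u)q(x|u) Tr[Π_{u,x}]` is at most `C`, then the expected overlap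
`∑ p(u)q(x|u)q(x̃|u) Tr[Π̄ᵤ Π_{u,x} Π̄ᵤ ρ_{u,x̃}]` is at most `c·C`. -/
theorem quantum_packing_core {U X : Type*} [Fintype U] [Fintype X] {D : ℕ}
    (p : U → ℝ) (hp : ∀ u, 0 ≤ p u) (hpsum : ∑ u, p u = 1)
    (q : U → X → ℝ) (hq : ∀ u x, 0 ≤ q u x) (hqsum : ∀ u, ∑ x, q u x = 1)
    (ρ : U → X → Matrix (Fin D) (Fin D) ℂ)
    (hρ : ∀ u x, (ρ u x).PosSemidef ∧ (ρ u x).trace = 1)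
    (Pb : U → Matrix (Fin D) (Fin D) ℂ)
    (hPb : ∀ u, (Pb u).IsHermitian ∧ Pb u * Pb u = Pb u)
    (Pux : U → X → Matrix (Fin D) (Fin D) ℂ)
    (hPux : ∀ u x, (Pux u x).IsHermitian ∧ Pux u x * Pux u x = Pux u x)
    (c C : ℝ) (hc : 0 ≤ c) (hC : 0 ≤ C)
    (h1 : ∀ u, (c • Pb u - Pb u * (∑ x, (q u x : ℂ) • ρ u x) * Pb u).PosSemidef)
    (h2 : ∑ u, ∑ x, p u * q u x * (Pux u x).trace.re ≤ C) :
    ∑ u, ∑ x, ∑ x', p u * q u x * q u x' *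
        (Pb u * Pux u x * Pb u * ρ u x').trace.re ≤ c * C :=
  quantum_packing_core_general p hp q hq ρ Pb hPb Pux hPux c C hc h1 h2
end
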